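/- Let A be an assembly with a Guilbaud voting system 𝓔 and a profile assignment π : A → ZMod 6. If p ∈ ZMod 6 is such that both coalitions {v | π v ∈ {p, p+1, p+2}} and {v | π v ∈ {p+1, p+2, p+3}} are efficient, then the collective preference relation ≻ coincides with one of the two rankings pref (p+1) or pref (p+2); that is, either (∀ x y, x ≻ y ↔ pref (p+1) x y) or (∀ x y, x ≻ y ↔ pref (p+2) x y). -/

import Mathlib

/-! For `x ≠ y` the profiles ranking `x` above `y` form an arc `{s, s + 1, s + 2}` of the cycle
`ZMod 6`, and the remaining profiles form the opposite arc. By (C1) exactly one of two opposite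
arcs is efficient, so once the three arcs through a profile `c` are efficient, an arc is efficient
iff it contains `c`, and `≻` is `pref c`. The arcs at `p` and `p + 1` are efficient by hypothesis;
of the opposite arcs at `p + 2` and `p - 1` exactly one is, completing the arcs through `p + 2` or
through `p + 1`. -/

/-- The rank (position, 0 = first) of candidate `x` in the ranking labeled `p`.
Profile 1 is a>b>c, 2 is a>c>b, 3 is c>a>b, 4 is c>b>a, 5 is b>c>a, 0 is b>a>c,
with candidates a = 0, b = 1, c = 2 in `Fin 3`. -/
def rank (p : ZMod 6) : Fin 3 → Fin 3 :=
  match p.val with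
  | 0 => ![1, 0, 2]  -- b>a>c
  | 1 => ![0, 1, 2]  -- a>b>c
  | 2 => ![0, 2, 1]  -- a>c>b
  | 3 => ![1, 2, 0]  -- c>a>b
  | 4 => ![2, 1, 0]  -- c>b>a
  | _ => ![2, 0, 1]  -- b>c>a

/-- The strict linear order on candidates given by profile `p`: `x` is ranked above `y`. -/
def pref (p : ZMod 6) (x y : Fin 3) : Prop := rank p x < rank p y

/-- The collective preference: `x ≻ y` iff the coalition of voters preferring `x` to `y`
is efficient. -/
def collPref {A : Type*} (𝓔 : Set (Set A)) (π : A → ZMod 6) (x y : Fin 3) : Prop :=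
  {v : A | pref (π v) x y} ∈ 𝓔

def arc (s : ZMod 6) : Set (ZMod 6) := {s, s + 1, s + 2}

lemma compl_arc (s : ZMod 6) : (arc s)ᶜ = arc (s + 3) := by
  ext q
  simp only [arc, Set.mem_compl_iff, Set.mem_insert_iff, Set.mem_singleton_iff]
  revert s q
  decide

lemma mem_arc_iff (c t : ZMod 6) : c ∈ arc t ↔ t = c - 2 ∨ t = c - 1 ∨ t = c := by
  simp only [arc, Set.mem_insert_iff, Set.mem_singleton_iff]
  revert c t
  decide

lemma exists_setOf_pref_eq_arc {x y : Fin 3} (hxy : x ≠ y) :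
    ∃ s, {q | pref q x y} = arc s := by
  suffices ∀ x y : Fin 3, x ≠ y → ∃ s, ∀ q, pref q x y ↔ q = s ∨ q = s + 1 ∨ q = s + 2 by
    obtain ⟨s, hs⟩ := this x y hxy
    exact ⟨s, Set.ext hs⟩
  unfold pref
  decide

section Guilbaud

variable {A : Type*} {𝓔 : Set (Set A)}

lemma empty_notMem_of_mem (hC1 : ∀ K : Set A, K ∈ 𝓔 ↔ Kᶜ ∉ 𝓔)
    (hC2 : ∀ K L : Set A, K ∈ 𝓔 → K ⊆ L → L ∈ 𝓔) {K : Set A} (hK : K ∈ 𝓔) : ∅ ∉ 𝓔 := by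
  rw [hC1, Set.compl_empty, not_not]
  exact hC2 K _ hK (Set.subset_univ K)

variable {π : A → ZMod 6} {c : ZMod 6}

lemma preimage_arc_mem_iff (hC1 : ∀ K : Set A, K ∈ 𝓔 ↔ Kᶜ ∉ 𝓔)
    (h₀ : π ⁻¹' arc (c - 2) ∈ 𝓔) (h₁ : π ⁻¹' arc (c - 1) ∈ 𝓔) (h₂ : π ⁻¹' arc c ∈ 𝓔)
    (s : ZMod 6) : π ⁻¹' arc s ∈ 𝓔 ↔ c ∈ arc s := by
  have hc : ∀ t, c ∈ arc t → π ⁻¹' arc t ∈ 𝓔 := by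
    intro t ht
    rcases (mem_arc_iff c t).mp ht with rfl | rfl | rfl <;> assumption
  by_cases hs : c ∈ arc s
  · exact iff_of_true (hc s hs) hs
  · refine iff_of_false ?_ hs
    rw [hC1, ← Set.preimage_compl, compl_arc, not_not]
    exact hc _ (by rwa [← compl_arc])

lemma collPref_iff_pref (hC1 : ∀ K : Set A, K ∈ 𝓔 ↔ Kᶜ ∉ 𝓔)
    (hC2 : ∀ K L : Set A, K ∈ 𝓔 → K ⊆ L → L ∈ 𝓔)
    (h₀ : π ⁻¹' arc (c - 2) ∈ 𝓔) (h₁ : π ⁻¹' arc (c - 1) ∈ 𝓔) (h₂ : π ⁻¹' arc c ∈ 𝓔)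
    (x y : Fin 3) : collPref 𝓔 π x y ↔ pref c x y := by
  obtain rfl | hxy := eq_or_ne x y
  · have hempty : {v : A | pref (π v) x x} = ∅ := by simp [pref]
    rw [collPref, hempty]
    exact iff_of_false (empty_notMem_of_mem hC1 hC2 h₂) (lt_irrefl _)
  · obtain ⟨s, hs⟩ := exists_setOf_pref_eq_arc hxy
    change π ⁻¹' {q | pref q x y} ∈ 𝓔 ↔ c ∈ {q | pref q x y}
    rw [hs, preimage_arc_mem_iff hC1 h₀ h₁ h₂]

end Guilbaud

theorem conditionC_collective_is_p1_or_p2 {A : Type*} (𝓔 : Set (Set A))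
    (hC1 : ∀ K : Set A, K ∈ 𝓔 ↔ Kᶜ ∉ 𝓔)
    (hC2 : ∀ K L : Set A, K ∈ 𝓔 → K ⊆ L → L ∈ 𝓔)
    (π : A → ZMod 6) (p : ZMod 6)
    (h1 : {v : A | π v ∈ ({p, p + 1, p + 2} : Set (ZMod 6))} ∈ 𝓔)
    (h2 : {v : A | π v ∈ ({p + 1, p + 2, p + 3} : Set (ZMod 6))} ∈ 𝓔) :
    (∀ x y : Fin 3, collPref 𝓔 π x y ↔ pref (p + 1) x y) ∨
    (∀ x y : Fin 3, collPref 𝓔 π x y ↔ pref (p + 2) x y) := by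
  have hp : π ⁻¹' arc p ∈ 𝓔 := h1
  have hp1 : π ⁻¹' arc (p + 1) ∈ 𝓔 := by
    rwa [show arc (p + 1) = {p + 1, p + 2, p + 3} by simp only [arc]; ring_nf]
  by_cases hp2 : π ⁻¹' arc (p + 2) ∈ 𝓔
  · exact .inr (collPref_iff_pref hC1 hC2 (by rwa [add_sub_cancel_right])
      (by rwa [show p + 2 - 1 = p + 1 by ring]) hp2)
  · have hp_sub_one : π ⁻¹' arc (p + 1 - 2) ∈ 𝓔 := by
      rwa [hC1, ← Set.preimage_compl, compl_arc, show p + 1 - 2 + 3 = p + 2 by ring]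
    exact .inl (collPref_iff_pref hC1 hC2 hp_sub_one (by rwa [add_sub_cancel_right]) hp1)
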